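/- Let p, q ∈ ℂ with |p| < 1 and |q| < 1. Then the function x ↦ (1 − x) · Γ_{p,q}(x) tends to 1/((p; p)_∞ · (q; q)_∞) as x → 1 with x ≠ 1 (note that for x ≠ 1 in a sufficiently small neighborhood of 1, Γ_{p,q}(x) is defined, since the only point of {p^{−i}q^{−j} : i, j ≥ 0} at distance 0 from 1 is 1 itself). -/

import Mathlib

open Complex Filter Topology

/-- The elliptic Gamma function `Γ_{a,b}(z) = ∏_{i,j ≥ 0} (1 - a^{i+1} b^{j+1}/z)/(1 - a^i b^j z)`. -/
noncomputable def ellGamma (a b z : ℂ) : ℂ :=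
  ∏' ij : ℕ × ℕ, (1 - a ^ (ij.1 + 1) * b ^ (ij.2 + 1) / z) / (1 - a ^ ij.1 * b ^ ij.2 * z)

/-- The infinite Pochhammer symbol `(x; r)_∞ = ∏_{k ≥ 0} (1 - r^k x)`. -/
noncomputable def qPoch (x r : ℂ) : ℂ :=
  ∏' k : ℕ, (1 - r ^ k * x)

/-- The complex absolute value, as an absolute value (port shim). -/
noncomputable abbrev Complex.abs : AbsoluteValue ℂ ℝ := NormedField.toAbsoluteValue ℂ

lemma Complex.norm_eq_abs (z : ℂ) : ‖z‖ = Complex.abs z := rfl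

namespace EllGammaProof

lemma one_sub_ne_zero {z : ℂ} (hz : Complex.abs z < 1) : (1 : ℂ) - z ≠ 0 := by
  intro h
  rw [sub_eq_zero] at h
  rw [← h] at hz
  simp at hz

lemma mem_slit {z : ℂ} (hz : Complex.abs (z - 1) < 1) : z ∈ Complex.slitPlane := by
  have := Complex.mem_slitPlane_of_norm_lt_one (z := z - 1) (by rwa [Complex.norm_eq_abs])
  simpa using this

/-- Infinite products of factors `f i` with `f i - 1` summable and `f i ≠ 0` converge to
the exponential of the sum of logs. -/
lemma hasProdExpLog {ι : Type*} {f : ι → ℂ} (h0 : ∀ i, f i ≠ 0)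
    (hs : Summable fun i => f i - 1) :
    HasProd f (Complex.exp (∑' i, Complex.log (f i))) := by
  have hn : Summable fun i => ‖f i - 1‖ := summable_norm_iff.mpr hs
  have hev : ∀ᶠ i in Filter.cofinite, ‖f i - 1‖ < 1 / 2 :=
    Filter.Tendsto.eventually_lt_const (by norm_num) hn.tendsto_cofinite_zero
  have hlog : Summable fun i => Complex.log (f i) := by
    refine Summable.of_norm_bounded_eventually (g := fun i => 3 / 2 * ‖f i - 1‖)
      (hn.mul_left _) ?_
    filter_upwards [hev] with i hi
    have h2 : ‖Complex.log (1 + (f i - 1))‖ ≤ 3 / 2 * ‖f i - 1‖ :=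
      Complex.norm_log_one_add_half_le_self hi.le
    rw [show (1 : ℂ) + (f i - 1) = f i by ring] at h2
    exact h2
  have h3 := hlog.hasSum.cexp
  exact h3.congr_fun fun i => (Complex.exp_log (h0 i)).symm

/-- The modified factors: at `(0,0)` the pole factor `1 - x` is removed. -/
noncomputable def hf (p q : ℂ) (ij : ℕ × ℕ) (x : ℂ) : ℂ :=
  if ij = (0, 0) then 1 - p * q / x
  else (1 - p ^ (ij.1 + 1) * q ^ (ij.2 + 1) / x) / (1 - p ^ ij.1 * q ^ ij.2 * x)

noncomputable def rr (p q : ℂ) : ℝ := max (Complex.abs p) (Complex.abs q)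

noncomputable def del (p q : ℂ) : ℝ := (1 - rr p q) / 2

noncomputable def Kc (p q : ℂ) : ℝ := 8 / (1 - rr p q)

noncomputable def ub (p q : ℂ) (ij : ℕ × ℕ) : ℝ :=
  Kc p q * (Complex.abs p ^ ij.1 * Complex.abs q ^ ij.2)

section Estimates

variable {p q : ℂ} (hp : Complex.abs p < 1) (hq : Complex.abs q < 1)

include hp hq

lemma r_lt_one : rr p q < 1 := max_lt hp hq

omit hp hq

lemma r_nonneg : 0 ≤ rr p q := le_trans (Complex.abs.nonneg p) (le_max_left _ _)

lemma hpr : Complex.abs p ≤ rr p q := le_max_left _ _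
lemma hqr : Complex.abs q ≤ rr p q := le_max_right _ _

include hp hq

lemma del_pos : 0 < del p q := by
  have := r_lt_one hp hq
  unfold del
  linarith

omit hp hq

lemma pow_abs_le_one (hp : Complex.abs p < 1) (hq : Complex.abs q < 1) (i j : ℕ) :
    Complex.abs p ^ i * Complex.abs q ^ j ≤ 1 := by
  have h1 : Complex.abs p ^ i ≤ 1 := pow_le_one₀ (Complex.abs.nonneg p) hp.le
  have h2 : Complex.abs q ^ j ≤ 1 := pow_le_one₀ (Complex.abs.nonneg q) hq.le
  have h3 : (0:ℝ) ≤ Complex.abs q ^ j := pow_nonneg (Complex.abs.nonneg q) j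
  nlinarith [pow_nonneg (Complex.abs.nonneg p) i]

lemma pow_abs_le_r {i j : ℕ} (hp : Complex.abs p < 1) (hq : Complex.abs q < 1)
    (hij : (i, j) ≠ ((0, 0) : ℕ × ℕ)) :
    Complex.abs p ^ i * Complex.abs q ^ j ≤ rr p q := by
  have h0p := Complex.abs.nonneg p
  have h0q := Complex.abs.nonneg q
  rcases Nat.eq_zero_or_pos i with hi | hi
  · subst hi
    have hj : 1 ≤ j := by
      rcases Nat.eq_zero_or_pos j with hj | hj
      · exact absurd (by simp [hj]) hij
      · exact hj
    have h1 : Complex.abs q ^ j ≤ Complex.abs q ^ 1 :=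
      pow_le_pow_of_le_one h0q hq.le hj
    rw [pow_one] at h1
    simpa using h1.trans (hqr (p := p))
  · have h1 : Complex.abs p ^ i ≤ Complex.abs p ^ 1 :=
      pow_le_pow_of_le_one h0p hp.le hi
    rw [pow_one] at h1
    have h2 : Complex.abs q ^ j ≤ 1 := pow_le_one₀ h0q hq.le
    calc Complex.abs p ^ i * Complex.abs q ^ j ≤ Complex.abs p * 1 := by
          apply mul_le_mul h1 h2 (pow_nonneg h0q j) h0p
      _ = Complex.abs p := mul_one _
      _ ≤ rr p q := hpr

variable {x : ℂ} (hx : x ∈ Metric.closedBall (1 : ℂ) (del p q))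

include hp hq hx

lemma abs_x_lower : 1 - del p q ≤ Complex.abs x := by
  rw [Metric.mem_closedBall, Complex.dist_eq, Complex.norm_eq_abs] at hx
  have h1 := norm_sub_norm_le (1 : ℂ) x
  rw [norm_sub_rev] at h1
  simp only [Complex.norm_eq_abs, map_one] at h1
  linarith

lemma abs_x_upper : Complex.abs x ≤ 1 + del p q := by
  rw [Metric.mem_closedBall, Complex.dist_eq, Complex.norm_eq_abs] at hx
  have h1 := norm_sub_norm_le x (1 : ℂ)
  simp only [Complex.norm_eq_abs, map_one] at h1
  linarith

lemma x_ne_zero : x ≠ 0 := by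
  have h1 := abs_x_lower hp hq hx
  have h2 := r_lt_one hp hq
  have h3 := r_nonneg (p := p) (q := q)
  intro h
  rw [h] at h1
  simp only [map_zero] at h1
  unfold del at h1
  linarith

lemma num_lt (i j : ℕ) : Complex.abs (p ^ (i + 1) * q ^ (j + 1) / x) < 1 := by
  have h0p := Complex.abs.nonneg p
  have h0q := Complex.abs.nonneg q
  have hr1 := r_lt_one hp hq
  have hr0 := r_nonneg (p := p) (q := q)
  have hxl := abs_x_lower hp hq hx
  have hdel : del p q = (1 - rr p q) / 2 := rfl
  have hxpos : (0:ℝ) < (1 + rr p q) / 2 := by linarith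
  have hxl' : (1 + rr p q) / 2 ≤ Complex.abs x := by rw [hdel] at hxl; linarith
  have hpi : Complex.abs p ^ (i + 1) ≤ rr p q := by
    have h1 : Complex.abs p ^ (i + 1) ≤ Complex.abs p ^ 1 :=
      pow_le_pow_of_le_one h0p hp.le (by omega)
    rw [pow_one] at h1
    exact h1.trans hpr
  have hqj : Complex.abs q ^ (j + 1) ≤ rr p q := by
    have h1 : Complex.abs q ^ (j + 1) ≤ Complex.abs q ^ 1 :=
      pow_le_pow_of_le_one h0q hq.le (by omega)
    rw [pow_one] at h1
    exact h1.trans hqr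
  rw [map_div₀, map_mul, map_pow, map_pow]
  have hnum : Complex.abs p ^ (i + 1) * Complex.abs q ^ (j + 1) ≤ rr p q * rr p q :=
    mul_le_mul hpi hqj (pow_nonneg h0q _) hr0
  calc Complex.abs p ^ (i + 1) * Complex.abs q ^ (j + 1) / Complex.abs x
      ≤ rr p q * rr p q / ((1 + rr p q) / 2) :=
        div_le_div₀ (mul_nonneg hr0 hr0) hnum hxpos hxl'
    _ < 1 := by
        rw [div_lt_one hxpos]
        nlinarith

lemma den_le {i j : ℕ} (hij : (i, j) ≠ ((0, 0) : ℕ × ℕ)) :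
    Complex.abs (p ^ i * q ^ j * x) ≤ (1 + rr p q) / 2 := by
  have hr1 := r_lt_one hp hq
  have hr0 := r_nonneg (p := p) (q := q)
  have hxu := abs_x_upper hp hq hx
  have hdel : del p q = (1 - rr p q) / 2 := rfl
  have hxu' : Complex.abs x ≤ (3 - rr p q) / 2 := by rw [hdel] at hxu; linarith
  have hb := pow_abs_le_r hp hq hij
  rw [map_mul, map_mul, map_pow, map_pow]
  calc Complex.abs p ^ i * Complex.abs q ^ j * Complex.abs x
      ≤ rr p q * ((3 - rr p q) / 2) :=
        mul_le_mul hb hxu' (Complex.abs.nonneg x) hr0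
    _ ≤ (1 + rr p q) / 2 := by nlinarith

lemma den_lt {i j : ℕ} (hij : (i, j) ≠ ((0, 0) : ℕ × ℕ)) :
    Complex.abs (p ^ i * q ^ j * x) < 1 := by
  have h1 := den_le hp hq hx hij
  have h2 := r_lt_one hp hq
  linarith

lemma key_estimate (ij : ℕ × ℕ) : Complex.abs (hf p q ij x - 1) ≤ ub p q ij := by
  have h0p := Complex.abs.nonneg p
  have h0q := Complex.abs.nonneg q
  have hr1 := r_lt_one hp hq
  have hr0 := r_nonneg (p := p) (q := q)
  have hxl := abs_x_lower hp hq hx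
  have hxu := abs_x_upper hp hq hx
  have hdel : del p q = (1 - rr p q) / 2 := rfl
  have hxl' : (1 + rr p q) / 2 ≤ Complex.abs x := by rw [hdel] at hxl; linarith
  have hxhalf : (1:ℝ)/2 ≤ Complex.abs x := by linarith
  have hKge : (8:ℝ) ≤ Kc p q := by
    unfold Kc
    rw [le_div_iff₀ (by linarith)]
    nlinarith
  by_cases hij : ij = (0, 0)
  · subst hij
    have h1 : hf p q (0, 0) x - 1 = -(p * q / x) := by
      simp [hf]
    rw [h1, map_neg_eq_map, map_div₀, map_mul]
    have hpq1 : Complex.abs p * Complex.abs q ≤ 1 := by nlinarith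
    have h2 : Complex.abs p * Complex.abs q / Complex.abs x ≤ 2 := by
      rw [div_le_iff₀ (by linarith)]
      nlinarith
    have h3 : ub p q (0, 0) = Kc p q := by simp [ub]
    rw [h3]
    linarith
  · obtain ⟨i, j⟩ := ij
    have hij' : ((i, j) : ℕ × ℕ) ≠ (0, 0) := hij
    set β : ℝ := Complex.abs p ^ i * Complex.abs q ^ j with hβ
    have hβ0 : 0 ≤ β := mul_nonneg (pow_nonneg h0p i) (pow_nonneg h0q j)
    have hβ1 : β ≤ 1 := pow_abs_le_one hp hq i j
    have habsb : Complex.abs (p ^ i * q ^ j) = β := by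
      rw [map_mul, map_pow, map_pow]
    have hdle := den_le hp hq hx hij'
    have hden_ne : (1 : ℂ) - p ^ i * q ^ j * x ≠ 0 :=
      one_sub_ne_zero (den_lt hp hq hx hij')
    have hdlow : (1 - rr p q) / 2 ≤ Complex.abs (1 - p ^ i * q ^ j * x) := by
      have h4 := norm_sub_norm_le (1 : ℂ) (p ^ i * q ^ j * x)
      simp only [Complex.norm_eq_abs, map_one] at h4
      linarith
    have hstep : hf p q (i, j) x - 1 =
        (p ^ i * q ^ j * x - p ^ (i + 1) * q ^ (j + 1) / x) / (1 - p ^ i * q ^ j * x) := by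
      rw [show hf p q (i, j) x = (1 - p ^ (i + 1) * q ^ (j + 1) / x) /
        (1 - p ^ i * q ^ j * x) from by simp only [hf]; rw [if_neg hij]]
      rw [div_sub_one hden_ne]
      congr 1
      ring
    -- numerator bounds
    have hBx : Complex.abs (p ^ i * q ^ j * x) ≤ 2 * β := by
      rw [map_mul, habsb]
      have : Complex.abs x ≤ 2 := by
        rw [hdel] at hxu; linarith
      nlinarith
    have hAx : Complex.abs (p ^ (i + 1) * q ^ (j + 1) / x) ≤ 2 * β := by
      rw [map_div₀, map_mul, map_pow, map_pow]
      have hA : Complex.abs p ^ (i + 1) * Complex.abs q ^ (j + 1) ≤ β := by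
        rw [pow_succ, pow_succ]
        calc Complex.abs p ^ i * Complex.abs p * (Complex.abs q ^ j * Complex.abs q)
            = β * (Complex.abs p * Complex.abs q) := by rw [hβ]; ring
          _ ≤ β * 1 := by
              have hle : Complex.abs p * Complex.abs q ≤ 1 := by nlinarith
              exact mul_le_mul_of_nonneg_left hle hβ0
          _ = β := mul_one β
      rw [div_le_iff₀ (by linarith : (0:ℝ) < Complex.abs x)]
      nlinarith
    have hnum : Complex.abs (p ^ i * q ^ j * x - p ^ (i + 1) * q ^ (j + 1) / x) ≤ 4 * β := by
      have h5 := norm_sub_le (p ^ i * q ^ j * x) (p ^ (i + 1) * q ^ (j + 1) / x)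
      simp only [Complex.norm_eq_abs] at h5
      linarith
    rw [hstep, map_div₀]
    have hfin : Complex.abs (p ^ i * q ^ j * x - p ^ (i + 1) * q ^ (j + 1) / x) /
        Complex.abs (1 - p ^ i * q ^ j * x) ≤ 4 * β / ((1 - rr p q) / 2) :=
      div_le_div₀ (by positivity) hnum (by linarith) hdlow
    have heq : 4 * β / ((1 - rr p q) / 2) = ub p q (i, j) := by
      unfold ub Kc
      rw [← hβ]
      field_simp
      ring
    rw [heq] at hfin
    exact hfin

lemma hf_ne_zero (ij : ℕ × ℕ) : hf p q ij x ≠ 0 := by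
  by_cases hij : ij = (0, 0)
  · subst hij
    have h1 := num_lt hp hq hx 0 0
    simp only [zero_add, pow_one] at h1
    simp only [hf, if_pos rfl]
    exact one_sub_ne_zero h1
  · obtain ⟨i, j⟩ := ij
    simp only [hf, if_neg hij]
    exact div_ne_zero (one_sub_ne_zero (num_lt hp hq hx i j))
      (one_sub_ne_zero (den_lt hp hq hx hij))

end Estimates

lemma geom_summable {p q : ℂ} (hp : Complex.abs p < 1) (hq : Complex.abs q < 1) :
    Summable (fun ij : ℕ × ℕ => Complex.abs p ^ ij.1 * Complex.abs q ^ ij.2) :=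
  Summable.mul_of_nonneg (summable_geometric_of_lt_one (Complex.abs.nonneg p) hp)
    (summable_geometric_of_lt_one (Complex.abs.nonneg q) hq)
    (fun i => pow_nonneg (Complex.abs.nonneg p) i)
    (fun j => pow_nonneg (Complex.abs.nonneg q) j)

lemma ub_summable {p q : ℂ} (hp : Complex.abs p < 1) (hq : Complex.abs q < 1) :
    Summable (ub p q) :=
  (geom_summable hp hq).mul_left (Kc p q)

lemma ub_nonneg {p q : ℂ} (hp : Complex.abs p < 1) (hq : Complex.abs q < 1) (ij : ℕ × ℕ) :
    0 ≤ ub p q ij := by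
  have := r_lt_one hp hq
  refine mul_nonneg (div_nonneg (by norm_num) (by linarith)) ?_
  exact mul_nonneg (pow_nonneg (Complex.abs.nonneg p) _) (pow_nonneg (Complex.abs.nonneg q) _)

lemma sub_summable {p q x : ℂ} (hp : Complex.abs p < 1) (hq : Complex.abs q < 1)
    (hx : x ∈ Metric.closedBall (1 : ℂ) (del p q)) :
    Summable (fun ij : ℕ × ℕ => hf p q ij x - 1) := by
  refine Summable.of_norm_bounded (g := ub p q) (ub_summable hp hq) ?_
  intro ij
  rw [Complex.norm_eq_abs]
  exact key_estimate hp hq hx ij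

lemma hf_continuousOn {p q : ℂ} (hp : Complex.abs p < 1) (hq : Complex.abs q < 1) (ij : ℕ × ℕ) :
    ContinuousOn (fun x => hf p q ij x) (Metric.closedBall (1 : ℂ) (del p q)) := by
  by_cases hij : ij = (0, 0)
  · subst hij
    have heq : (fun x => hf p q (0, 0) x) = fun x : ℂ => 1 - p * q / x := by
      funext x; simp [hf]
    rw [heq]
    exact continuousOn_const.sub (continuousOn_const.div continuousOn_id
      (fun x hx => x_ne_zero hp hq hx))
  · have heq : (fun x => hf p q ij x) = fun x : ℂ =>
        (1 - p ^ (ij.1 + 1) * q ^ (ij.2 + 1) / x) / (1 - p ^ ij.1 * q ^ ij.2 * x) := by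
      funext x; simp only [hf]; rw [if_neg hij]
    rw [heq]
    refine ContinuousOn.div ?_ ?_ ?_
    · exact continuousOn_const.sub (continuousOn_const.div continuousOn_id
        (fun x hx => x_ne_zero hp hq hx))
    · exact continuousOn_const.sub (continuousOn_const.mul continuousOn_id)
    · intro x hx
      obtain ⟨i, j⟩ := ij
      exact one_sub_ne_zero (den_lt hp hq hx hij)

lemma hasProd_qPoch {c : ℂ} (hc : Complex.abs c < 1) :
    HasProd (fun k : ℕ => 1 - c ^ (k + 1)) (qPoch c c) := by
  have h0c := Complex.abs.nonneg c
  have hlt : ∀ k : ℕ, Complex.abs (c ^ (k + 1)) < 1 := by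
    intro k
    rw [map_pow]
    calc Complex.abs c ^ (k + 1) ≤ Complex.abs c ^ 1 :=
          pow_le_pow_of_le_one h0c hc.le (by omega)
      _ = Complex.abs c := pow_one _
      _ < 1 := hc
  have h0 : ∀ k : ℕ, (1 : ℂ) - c ^ (k + 1) ≠ 0 := fun k => one_sub_ne_zero (hlt k)
  have hs : Summable fun k : ℕ => ((1 : ℂ) - c ^ (k + 1)) - 1 := by
    refine Summable.of_norm_bounded (g := fun k => Complex.abs c ^ k)
      (summable_geometric_of_lt_one h0c hc) ?_
    intro k
    rw [show ((1 : ℂ) - c ^ (k + 1)) - 1 = -(c ^ (k + 1)) by ring, norm_neg,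
      Complex.norm_eq_abs, map_pow, pow_succ]
    exact mul_le_of_le_one_right (pow_nonneg h0c k) hc.le
  have h1 := hasProdExpLog h0 hs
  have h2 : qPoch c c = ∏' k : ℕ, (1 - c ^ (k + 1)) := by
    unfold qPoch
    exact tprod_congr fun k => by rw [pow_succ]
  rw [h2]
  exact h1.multipliable.hasProd

/-- Auxiliary factor supported on the `p`-axis. -/
noncomputable def Ap (p : ℂ) (ij : ℕ × ℕ) : ℂ :=
  if ij.2 = 0 ∧ ij.1 ≠ 0 then 1 - p ^ ij.1 else 1

/-- Auxiliary factor supported on the `q`-axis. -/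
noncomputable def Bq (q : ℂ) (ij : ℕ × ℕ) : ℂ :=
  if ij.1 = 0 ∧ ij.2 ≠ 0 then 1 - q ^ ij.2 else 1

/-- Auxiliary factor supported off the axes. -/
noncomputable def Np (p q : ℂ) (ij : ℕ × ℕ) : ℂ :=
  if ij.1 ≠ 0 ∧ ij.2 ≠ 0 then 1 - p ^ ij.1 * q ^ ij.2 else 1

lemma hasProd_Ap {p : ℂ} (hp : Complex.abs p < 1) : HasProd (Ap p) (qPoch p p) := by
  have hinj : Function.Injective (fun k : ℕ => ((k + 1, 0) : ℕ × ℕ)) := by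
    intro a b hab
    simpa [Prod.ext_iff] using hab
  have hvan : ∀ ij : ℕ × ℕ, ij ∉ Set.range (fun k : ℕ => ((k + 1, 0) : ℕ × ℕ)) →
      Ap p ij = 1 := by
    rintro ⟨i, j⟩ hij
    have hcond : ¬((i, j).2 = 0 ∧ (i, j).1 ≠ 0) := by
      rintro ⟨h2, h1⟩
      simp only at h1 h2
      exact hij ⟨i - 1, by simp only [Prod.mk.injEq]; omega⟩
    simp only [Ap, if_neg hcond]
  refine (hinj.hasProd_iff hvan).mp ?_
  have hcomp : (Ap p ∘ fun k : ℕ => ((k + 1, 0) : ℕ × ℕ)) = fun k : ℕ => 1 - p ^ (k + 1) := by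
    funext k
    simp [Ap]
  rw [hcomp]
  exact hasProd_qPoch hp

lemma hasProd_Bq {q : ℂ} (hq : Complex.abs q < 1) : HasProd (Bq q) (qPoch q q) := by
  have hinj : Function.Injective (fun k : ℕ => ((0, k + 1) : ℕ × ℕ)) := by
    intro a b hab
    simpa [Prod.ext_iff] using hab
  have hvan : ∀ ij : ℕ × ℕ, ij ∉ Set.range (fun k : ℕ => ((0, k + 1) : ℕ × ℕ)) →
      Bq q ij = 1 := by
    rintro ⟨i, j⟩ hij
    have hcond : ¬((i, j).1 = 0 ∧ (i, j).2 ≠ 0) := by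
      rintro ⟨h1, h2⟩
      simp only at h1 h2
      exact hij ⟨j - 1, by simp only [Prod.mk.injEq]; omega⟩
    simp only [Bq, if_neg hcond]
  refine (hinj.hasProd_iff hvan).mp ?_
  have hcomp : (Bq q ∘ fun k : ℕ => ((0, k + 1) : ℕ × ℕ)) = fun k : ℕ => 1 - q ^ (k + 1) := by
    funext k
    simp [Bq]
  rw [hcomp]
  exact hasProd_qPoch hq

lemma hasProd_Np {p q : ℂ} {a : ℂ}
    (hN : HasProd (fun ij : ℕ × ℕ => (1 : ℂ) - p ^ (ij.1 + 1) * q ^ (ij.2 + 1)) a) :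
    HasProd (Np p q) a := by
  have hinj : Function.Injective (fun ij : ℕ × ℕ => ((ij.1 + 1, ij.2 + 1) : ℕ × ℕ)) := by
    rintro ⟨a1, a2⟩ ⟨b1, b2⟩ hab
    simpa [Prod.ext_iff] using hab
  have hvan : ∀ ij : ℕ × ℕ,
      ij ∉ Set.range (fun ij : ℕ × ℕ => ((ij.1 + 1, ij.2 + 1) : ℕ × ℕ)) → Np p q ij = 1 := by
    rintro ⟨i, j⟩ hij
    have hcond : ¬((i, j).1 ≠ 0 ∧ (i, j).2 ≠ 0) := by
      rintro ⟨h1, h2⟩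
      simp only at h1 h2
      exact hij ⟨(i - 1, j - 1), by simp only [Prod.mk.injEq]; omega⟩
    simp only [Np, if_neg hcond]
  refine (hinj.hasProd_iff hvan).mp ?_
  have hcomp : (Np p q ∘ fun ij : ℕ × ℕ => ((ij.1 + 1, ij.2 + 1) : ℕ × ℕ)) =
      fun ij : ℕ × ℕ => (1 : ℂ) - p ^ (ij.1 + 1) * q ^ (ij.2 + 1) := by
    funext ij
    simp [Np]
  rw [hcomp]
  exact hN

lemma mult_eq {p q : ℂ} {ij : ℕ × ℕ} (hij : ij ≠ (0, 0)) :
    Np p q ij * (Ap p ij * Bq q ij) = 1 - p ^ ij.1 * q ^ ij.2 := by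
  obtain ⟨i, j⟩ := ij
  rcases i with _ | i <;> rcases j with _ | j
  · exact absurd rfl hij
  · simp [Np, Ap, Bq]
  · simp [Np, Ap, Bq]
  · simp [Np, Ap, Bq]

lemma prod_decomp {p q : ℂ} (hp : Complex.abs p < 1) (hq : Complex.abs q < 1) (ij : ℕ × ℕ) :
    (1 : ℂ) - p ^ (ij.1 + 1) * q ^ (ij.2 + 1) =
      hf p q ij 1 * (Np p q ij * (Ap p ij * Bq q ij)) := by
  have h1S : (1 : ℂ) ∈ Metric.closedBall (1 : ℂ) (del p q) :=
    Metric.mem_closedBall_self (del_pos hp hq).le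
  by_cases hij : ij = (0, 0)
  · subst hij
    simp [hf, Np, Ap, Bq]
  · rw [mult_eq hij]
    have hden : (1 : ℂ) - p ^ ij.1 * q ^ ij.2 ≠ 0 := by
      obtain ⟨i, j⟩ := ij
      have := den_lt hp hq h1S (show ((i, j) : ℕ × ℕ) ≠ (0, 0) from hij)
      rw [mul_one] at this
      exact one_sub_ne_zero this
    have hfe : hf p q ij 1 = (1 - p ^ (ij.1 + 1) * q ^ (ij.2 + 1)) /
        (1 - p ^ ij.1 * q ^ ij.2) := by
      simp only [hf]
      rw [if_neg hij, div_one, mul_one]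
    rw [hfe, div_mul_cancel₀ _ hden]

end EllGammaProof

open EllGammaProof in
/-- `(1 - x) Γ_{p,q}(x) → 1/((p;p)_∞ (q;q)_∞)` as `x → 1`, `x ≠ 1`. -/
theorem ellGamma_residue_one (p q : ℂ) (hp : ‖p‖ < 1) (hq : ‖q‖ < 1) :
    Tendsto (fun x : ℂ => (1 - x) * ellGamma p q x) (𝓝[≠] 1)
      (𝓝 (1 / (qPoch p p * qPoch q q))) := by
  classical
  have hδ : 0 < del p q := del_pos hp hq
  set S : Set ℂ := Metric.closedBall (1 : ℂ) (del p q) with hSdef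
  have h1S : (1 : ℂ) ∈ S := Metric.mem_closedBall_self hδ.le
  have hSnhds : S ∈ 𝓝 (1 : ℂ) := Metric.closedBall_mem_nhds _ hδ
  have hu : Summable (ub p q) := ub_summable hp hq
  -- the finitely many "bad" indices
  have hev : ∀ᶠ ij in Filter.cofinite, ub p q ij < 1 / 2 :=
    Filter.Tendsto.eventually_lt_const (by norm_num) hu.tendsto_cofinite_zero
  have hfin : {ij : ℕ × ℕ | ¬ub p q ij < 1 / 2}.Finite := Filter.eventually_cofinite.mp hev
  set T : Finset (ℕ × ℕ) := hfin.toFinset with hTdef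
  have hT : ∀ ij : ℕ × ℕ, ij ∉ T → ub p q ij < 1 / 2 := by
    intro ij hij
    by_contra hc
    exact hij (hfin.mem_toFinset.mpr hc)
  -- the product over the complement of T, as an exponential
  have hΨ : ∀ x ∈ S, HasProd (fun ij : ↥((T : Set (ℕ × ℕ))ᶜ) => hf p q (ij : ℕ × ℕ) x)
      (Complex.exp (∑' ij : ↥((T : Set (ℕ × ℕ))ᶜ), Complex.log (hf p q (ij : ℕ × ℕ) x))) :=
    fun x hx => hasProdExpLog (fun ij => hf_ne_zero hp hq hx ij)
      ((sub_summable hp hq hx).subtype _)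
  set W : ℂ → ℂ := fun x => (∏ ij ∈ T, hf p q ij x) *
      Complex.exp (∑' ij : ↥((T : Set (ℕ × ℕ))ᶜ), Complex.log (hf p q (ij : ℕ × ℕ) x))
    with hWdef
  have hsplit : ∀ x ∈ S, (∏' ij : ℕ × ℕ, hf p q ij x) = W x := by
    intro x hx
    have h1 : Multipliable ((fun ij : ℕ × ℕ => hf p q ij x) ∘
        (Subtype.val : ↥(T : Set (ℕ × ℕ)) → ℕ × ℕ)) := Multipliable.of_finite
    have h2 := hΨ x hx
    have h3 := Multipliable.tprod_mul_tprod_compl (f := fun ij : ℕ × ℕ => hf p q ij x)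
      (s := (T : Set (ℕ × ℕ))) h1 h2.multipliable
    calc (∏' ij : ℕ × ℕ, hf p q ij x)
        = (∏' ij : ↥(T : Set (ℕ × ℕ)), hf p q (ij : ℕ × ℕ) x) *
          ∏' ij : ↥((T : Set (ℕ × ℕ))ᶜ), hf p q (ij : ℕ × ℕ) x := h3.symm
      _ = W x := by
          congr 1
          · exact Finset.tprod_subtype' T (fun ij => hf p q ij x)
          · exact h2.tprod_eq
  -- continuity of the log-tail sum
  have hLcont : ContinuousOn
      (fun x => ∑' ij : ↥((T : Set (ℕ × ℕ))ᶜ), Complex.log (hf p q (ij : ℕ × ℕ) x)) S := by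
    have hb : Summable (fun ij : ↥((T : Set (ℕ × ℕ))ᶜ) => 3 / 2 * ub p q (ij : ℕ × ℕ)) :=
      (hu.mul_left (3 / 2)).subtype _
    refine (tendstoUniformlyOn_tsum hb ?_).continuousOn (Filter.Eventually.of_forall ?_).frequently
    · rintro ⟨ij, hij⟩ x hx
      have hub : ub p q ij < 1 / 2 := hT ij hij
      have hest : Complex.abs (hf p q ij x - 1) ≤ ub p q ij := key_estimate hp hq hx ij
      have hn : ‖hf p q ij x - 1‖ ≤ 1 / 2 := by rw [Complex.norm_eq_abs]; linarith
      have h4 : ‖Complex.log (1 + (hf p q ij x - 1))‖ ≤ 3 / 2 * ‖hf p q ij x - 1‖ :=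
        Complex.norm_log_one_add_half_le_self hn
      rw [show (1 : ℂ) + (hf p q ij x - 1) = hf p q ij x by ring] at h4
      refine h4.trans ?_
      rw [Complex.norm_eq_abs]
      have := mul_le_mul_of_nonneg_left hest (by norm_num : (0:ℝ) ≤ 3 / 2)
      simpa using this
    · intro t
      refine continuousOn_finset_sum t fun ij _ => ?_
      refine ContinuousOn.clog (hf_continuousOn hp hq ij) ?_
      intro x hx
      have hub : ub p q (ij : ℕ × ℕ) < 1 / 2 := hT _ ij.2
      have hest : Complex.abs (hf p q (ij : ℕ × ℕ) x - 1) ≤ ub p q (ij : ℕ × ℕ) :=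
        key_estimate hp hq hx _
      exact mem_slit (by linarith)
  have hWcontS : ContinuousOn W S :=
    (continuousOn_finset_prod T fun ij _ => hf_continuousOn hp hq ij).mul
      (Complex.continuous_exp.comp_continuousOn hLcont)
  have hWtendsto : Tendsto W (𝓝[≠] (1 : ℂ)) (𝓝 (W 1)) :=
    ((hWcontS.continuousAt hSnhds).tendsto).mono_left nhdsWithin_le_nhds
  -- eventual equality with (1 - x) * ellGamma
  have hveq : ∀ᶠ x in 𝓝[≠] (1 : ℂ), (1 - x) * ellGamma p q x = W x := by
    have hS' : ∀ᶠ x in 𝓝[≠] (1 : ℂ), x ∈ S := nhdsWithin_le_nhds hSnhds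
    filter_upwards [hS', self_mem_nhdsWithin] with x hxS hx1
    have hx1' : x ≠ 1 := hx1
    have h1x : (1 : ℂ) - x ≠ 0 := sub_ne_zero.mpr (Ne.symm hx1')
    have hupdmul : Multipliable (Function.update (fun ij : ℕ × ℕ => hf p q ij x) (0, 0) 1) := by
      refine (hasProdExpLog ?_ ?_).multipliable
      · intro ij
        by_cases hij : ij = (0, 0)
        · subst hij; simp
        · rw [Function.update_of_ne hij]
          exact hf_ne_zero hp hq hxS ij
      · refine Summable.of_norm_bounded (g := ub p q) hu ?_
        intro ij
        by_cases hij : ij = (0, 0)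
        · subst hij
          simp only [Function.update_self, sub_self, norm_zero]
          exact ub_nonneg hp hq _
        · rw [Function.update_of_ne hij, Complex.norm_eq_abs]
          exact key_estimate hp hq hxS ij
    have hFupd : Function.update (fun ij : ℕ × ℕ =>
          (1 - p ^ (ij.1 + 1) * q ^ (ij.2 + 1) / x) / (1 - p ^ ij.1 * q ^ ij.2 * x)) (0, 0) 1
        = Function.update (fun ij : ℕ × ℕ => hf p q ij x) (0, 0) 1 := by
      funext ij
      by_cases hij : ij = (0, 0)
      · subst hij; simp
      · rw [Function.update_of_ne hij, Function.update_of_ne hij]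
        simp only [hf]; rw [if_neg hij]
    have hupdmul' : Multipliable (Function.update (fun ij : ℕ × ℕ =>
        (1 - p ^ (ij.1 + 1) * q ^ (ij.2 + 1) / x) / (1 - p ^ ij.1 * q ^ ij.2 * x)) (0, 0) 1) := by
      rw [hFupd]; exact hupdmul
    have e1 : ellGamma p q x =
        (1 - p ^ (0 + 1) * q ^ (0 + 1) / x) / (1 - p ^ 0 * q ^ 0 * x) *
        ∏' ij : ℕ × ℕ, (if ij = (0, 0) then 1 else
          (1 - p ^ (ij.1 + 1) * q ^ (ij.2 + 1) / x) / (1 - p ^ ij.1 * q ^ ij.2 * x)) :=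
      Multipliable.tprod_eq_mul_tprod_ite' (0, 0) hupdmul'
    have e2 : (∏' ij : ℕ × ℕ, hf p q ij x) = hf p q (0, 0) x *
        ∏' ij : ℕ × ℕ, (if ij = (0, 0) then 1 else hf p q ij x) :=
      Multipliable.tprod_eq_mul_tprod_ite' (0, 0) hupdmul
    have e3 : (∏' ij : ℕ × ℕ, (if ij = (0, 0) then 1 else
          (1 - p ^ (ij.1 + 1) * q ^ (ij.2 + 1) / x) / (1 - p ^ ij.1 * q ^ ij.2 * x)))
        = ∏' ij : ℕ × ℕ, (if ij = (0, 0) then 1 else hf p q ij x) := by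
      refine tprod_congr fun ij => ?_
      by_cases hij : ij = (0, 0)
      · rw [if_pos hij, if_pos hij]
      · rw [if_neg hij, if_neg hij]
        simp only [hf]; rw [if_neg hij]
    rw [← hsplit x hxS, e1, e3, e2, ← mul_assoc]
    congr 1
    simp only [hf, if_pos rfl, zero_add, pow_one, pow_zero, one_mul]
    rw [mul_comm]
    exact div_mul_cancel₀ _ h1x
  -- the value at 1
  have hP1 : HasProd (fun ij : ℕ × ℕ => hf p q ij 1) (W 1) := by
    have hm : Multipliable (fun ij : ℕ × ℕ => hf p q ij 1) :=
      (hasProdExpLog (fun ij => hf_ne_zero hp hq h1S ij) (sub_summable hp hq h1S)).multipliable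
    have := hm.hasProd
    rwa [hsplit 1 h1S] at this
  have hr1 := r_lt_one hp hq
  have h0p := Complex.abs.nonneg p
  have h0q := Complex.abs.nonneg q
  have hNne : ∀ ij : ℕ × ℕ, (1 : ℂ) - p ^ (ij.1 + 1) * q ^ (ij.2 + 1) ≠ 0 := by
    intro ij
    apply one_sub_ne_zero
    rw [map_mul, map_pow, map_pow]
    have h1 : Complex.abs p ^ (ij.1 + 1) ≤ Complex.abs p := by
      calc Complex.abs p ^ (ij.1 + 1) ≤ Complex.abs p ^ 1 :=
            pow_le_pow_of_le_one h0p hp.le (by omega)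
        _ = _ := pow_one _
    have h2 : Complex.abs q ^ (ij.2 + 1) ≤ 1 := pow_le_one₀ h0q hq.le
    nlinarith [pow_nonneg h0q (ij.2 + 1), pow_nonneg h0p (ij.1 + 1),
      (show Complex.abs p < 1 from hp), (show Complex.abs q < 1 from hq)]
  have hNsum : Summable (fun ij : ℕ × ℕ => ((1 : ℂ) - p ^ (ij.1 + 1) * q ^ (ij.2 + 1)) - 1) := by
    refine Summable.of_norm_bounded (geom_summable hp hq) ?_
    intro ij
    rw [show ((1 : ℂ) - p ^ (ij.1 + 1) * q ^ (ij.2 + 1)) - 1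
        = -(p ^ (ij.1 + 1) * q ^ (ij.2 + 1)) by ring]
    rw [norm_neg, Complex.norm_eq_abs, map_mul, map_pow, map_pow]
    have heq : Complex.abs p ^ (ij.1 + 1) * Complex.abs q ^ (ij.2 + 1)
        = Complex.abs p ^ ij.1 * Complex.abs q ^ ij.2 * (Complex.abs p * Complex.abs q) := by
      rw [pow_succ, pow_succ]; ring
    rw [heq]
    refine mul_le_of_le_one_right ?_ ?_
    · exact mul_nonneg (pow_nonneg h0p _) (pow_nonneg h0q _)
    · nlinarith [(show Complex.abs p < 1 from hp), (show Complex.abs q < 1 from hq)]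
  have hN := hasProdExpLog hNne hNsum
  set n : ℂ := Complex.exp (∑' ij : ℕ × ℕ,
      Complex.log (1 - p ^ (ij.1 + 1) * q ^ (ij.2 + 1))) with hndef
  have hn0 : n ≠ 0 := Complex.exp_ne_zero _
  have hNprod : HasProd (fun ij : ℕ × ℕ => (1 : ℂ) - p ^ (ij.1 + 1) * q ^ (ij.2 + 1))
      (W 1 * (n * (qPoch p p * qPoch q q))) := by
    have hcomb := hP1.mul ((hasProd_Np hN).mul ((hasProd_Ap hp).mul (hasProd_Bq hq)))
    exact hcomb.congr_fun fun ij => prod_decomp hp hq ij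
  have hval0 : W 1 * (n * (qPoch p p * qPoch q q)) = n := hNprod.unique hN
  have h2 : W 1 * (qPoch p p * qPoch q q) = 1 := by
    apply mul_left_cancel₀ hn0
    rw [mul_one]
    linear_combination hval0
  have hval : W 1 = 1 / (qPoch p p * qPoch q q) := eq_one_div_of_mul_eq_one_left h2
  rw [← hval]
  exact Filter.Tendsto.congr' (Filter.EventuallyEq.symm hveq) hWtendsto
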